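/- arXiv:2605.10205 — 2 statements merged into one kernel-verified Lean document; each statement's English description precedes it below -/
import Mathlib

section
/- Assume f is convex, L-Lipschitz and β-smooth, P is a gossip matrix with spectral bound λ ∈ [0, 1), and η_t ≤ 2/β for every t ∈ {1,…,T}. Then for every z ∈ 𝒵, |f(w̄^{T+1}; z) − f(v̄^{T+1}; z)| ≤ 4βL² ∑_{t=1}^T η_t ∑_{q=1}^{t−1} η_q λ^{t−q−1} + (2L²/m) ∑_{t=1}^T η_t 𝟙[j_t(r)=k]. -/
/-!
Averaging a gossip step over the nodes leaves the mean unchanged, because `P` is doubly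
stochastic; so the means of the two runs perform gradient steps on the averaged loss, except that
the gradients are evaluated at the nodes instead of at the mean. For a convex `β`-smooth loss and
`η ≤ 2 / β` a gradient step is nonexpansive (co-coercivity of the gradient), so the gap between
the means only grows by that evaluation error, which is `β` times the consensus error, plus
`2 L η_t / m` whenever node `r` draws the replaced sample. The consensus error contracts by `λ` at
each gossip step and is fed by at most `2 L η_t` per node, which gives the geometric sums.
-/

open scoped RealInnerProductSpace
open Finset

section SmoothConvex

variable {H : Type*} [NormedAddCommGroup H] [InnerProductSpace ℝ H] {g : H → ℝ} {g' : H → H}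
  {β : ℝ}

theorem hasDerivAt_comp_add_smul (hg : ∀ x, HasFDerivAt g (innerSL ℝ (g' x)) x) (x d : H)
    (t : ℝ) : HasDerivAt (fun s : ℝ => g (x + s • d)) ⟪g' (x + t • d), d⟫ t := by
  have h := (hg (x + t • d)).comp_hasDerivAt t (((hasDerivAt_id t).smul_const d).const_add x)
  simp only [id, innerSL_apply_apply, one_smul] at h
  exact h

theorem ConvexOn.add_inner_sub_le (hconv : ConvexOn ℝ Set.univ g)
    (hg : ∀ x, HasFDerivAt g (innerSL ℝ (g' x)) x) (x y : H) :
    g x + ⟪g' x, y - x⟫ ≤ g y := by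
  have hline : ConvexOn ℝ Set.univ (fun s : ℝ => g (x + s • (y - x))) := by
    simpa [Function.comp_def, AffineMap.lineMap_apply_module', add_comm]
      using hconv.comp_affineMap (AffineMap.lineMap x y)
  have := hline.le_slope_of_hasDerivAt (Set.mem_univ 0) (Set.mem_univ 1) zero_lt_one
    (hasDerivAt_comp_add_smul hg x (y - x) 0)
  simp only [zero_smul, add_zero, slope_def_field, one_smul, add_sub_cancel, sub_zero, div_one]
    at this
  linarith

theorem le_add_inner_sub_add_sq (hg : ∀ x, HasFDerivAt g (innerSL ℝ (g' x)) x)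
    (hsmooth : ∀ x y, ‖g' x - g' y‖ ≤ β * ‖x - y‖) (x y : H) :
    g y ≤ g x + ⟪g' x, y - x⟫ + β / 2 * ‖y - x‖ ^ 2 := by
  set d := y - x
  -- `ψ` is antitone on `[0, ∞)` because `g'` grows at most linearly along the ray.
  set ψ : ℝ → ℝ := fun s => g (x + s • d) - s * ⟪g' x, d⟫ - β / 2 * ‖d‖ ^ 2 * s ^ 2
  have hψ : ∀ s, HasDerivAt ψ (⟪g' (x + s • d) - g' x, d⟫ - β * s * ‖d‖ ^ 2) s := fun s => by
    refine (((hasDerivAt_comp_add_smul hg x d s).sub ((hasDerivAt_id s).mul_const _)).sub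
      ((hasDerivAt_pow 2 s).const_mul (β / 2 * ‖d‖ ^ 2))).congr_deriv ?_
    rw [inner_sub_left]
    simp only [one_mul, Nat.cast_ofNat, Nat.add_one_sub_one, pow_one]
    ring
  have hanti : AntitoneOn ψ (Set.Ici 0) := by
    refine antitoneOn_of_hasDerivWithinAt_nonpos (convex_Ici 0)
      (fun s _ => (hψ s).continuousAt.continuousWithinAt) (fun s _ => (hψ s).hasDerivWithinAt) ?_
    intro s hs
    have hs : 0 ≤ s := le_of_lt (by rwa [interior_Ici] at hs)
    calc ⟪g' (x + s • d) - g' x, d⟫ - β * s * ‖d‖ ^ 2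
        ≤ β * ‖x + s • d - x‖ * ‖d‖ - β * s * ‖d‖ ^ 2 := by
          gcongr
          exact (real_inner_le_norm _ _).trans (by gcongr; exact hsmooth _ _)
      _ = 0 := by
          rw [add_sub_cancel_left, norm_smul, Real.norm_of_nonneg hs]; ring
  have hψ₀ : ψ 0 = g x := by simp [ψ]
  have hψ₁ : ψ 1 = g y - ⟪g' x, y - x⟫ - β / 2 * ‖y - x‖ ^ 2 := by simp [ψ, d]
  linarith [hanti (Set.mem_Ici.2 le_rfl) (Set.mem_Ici.2 zero_le_one) zero_le_one]

theorem add_inner_sub_add_norm_sq_le (hβ : 0 < β) (hconv : ConvexOn ℝ Set.univ g)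
    (hg : ∀ x, HasFDerivAt g (innerSL ℝ (g' x)) x)
    (hsmooth : ∀ x y, ‖g' x - g' y‖ ≤ β * ‖x - y‖) (a b : H) :
    g a + ⟪g' a, b - a⟫ + (2 * β)⁻¹ * ‖g' b - g' a‖ ^ 2 ≤ g b := by
  set d := g' b - g' a
  -- compare at the point reached from `b` by a gradient step on `g - ⟪g' a, ·⟫`
  set u := b - β⁻¹ • d
  have hlow := hconv.add_inner_sub_le hg a u
  have hup := le_add_inner_sub_add_sq hg hsmooth b u
  have hua : u - a = (b - a) - β⁻¹ • d := by simp only [u]; abel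
  have hub : u - b = -(β⁻¹ • d) := by simp only [u]; abel
  have hd : ⟪g' b, d⟫ - ⟪g' a, d⟫ = ‖d‖ ^ 2 := by
    rw [← inner_sub_left, real_inner_self_eq_norm_sq]
  rw [hua, inner_sub_right, real_inner_smul_right] at hlow
  rw [hub, inner_neg_right, real_inner_smul_right, norm_neg, norm_smul,
    Real.norm_of_nonneg (inv_nonneg.2 hβ.le)] at hup
  have : β / 2 * (β⁻¹ * ‖d‖) ^ 2 = β⁻¹ * ‖d‖ ^ 2 - (2 * β)⁻¹ * ‖d‖ ^ 2 := by
    field_simp; ring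
  rw [this] at hup
  have := congrArg (β⁻¹ * ·) hd
  simp only [mul_sub] at this
  linarith

theorem norm_sub_sq_le_mul_inner (hβ : 0 < β) (hconv : ConvexOn ℝ Set.univ g)
    (hg : ∀ x, HasFDerivAt g (innerSL ℝ (g' x)) x)
    (hsmooth : ∀ x y, ‖g' x - g' y‖ ≤ β * ‖x - y‖) (x y : H) :
    ‖g' x - g' y‖ ^ 2 ≤ β * ⟪g' x - g' y, x - y⟫ := by
  have hxy := add_inner_sub_add_norm_sq_le hβ hconv hg hsmooth x y
  have hyx := add_inner_sub_add_norm_sq_le hβ hconv hg hsmooth y x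
  rw [norm_sub_rev] at hxy
  have hinner : ⟪g' x - g' y, x - y⟫ = -⟪g' x, y - x⟫ - ⟪g' y, x - y⟫ := by
    rw [inner_sub_left, ← inner_neg_right, neg_sub]
  have : β⁻¹ * ‖g' x - g' y‖ ^ 2 ≤ ⟪g' x - g' y, x - y⟫ := by
    have : (2 * β)⁻¹ * ‖g' x - g' y‖ ^ 2 * 2 = β⁻¹ * ‖g' x - g' y‖ ^ 2 := by field_simp
    rw [hinner]; linarith
  calc ‖g' x - g' y‖ ^ 2 = β * (β⁻¹ * ‖g' x - g' y‖ ^ 2) := by field_simp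
    _ ≤ β * ⟪g' x - g' y, x - y⟫ := by gcongr

theorem norm_sub_smul_sub_sub_smul_le (hβ : 0 < β) (hconv : ConvexOn ℝ Set.univ g)
    (hg : ∀ x, HasFDerivAt g (innerSL ℝ (g' x)) x)
    (hsmooth : ∀ x y, ‖g' x - g' y‖ ≤ β * ‖x - y‖) {η : ℝ} (hη₀ : 0 ≤ η) (hη : η ≤ 2 / β)
    (x y : H) : ‖x - η • g' x - (y - η • g' y)‖ ≤ ‖x - y‖ := by
  have hcoco := norm_sub_sq_le_mul_inner hβ hconv hg hsmooth x y
  have hsplit : x - η • g' x - (y - η • g' y) = (x - y) - η • (g' x - g' y) := by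
    rw [smul_sub]; abel
  rw [← sq_le_sq₀ (norm_nonneg _) (norm_nonneg _), hsplit, norm_sub_sq_real, norm_smul,
    real_inner_smul_right, Real.norm_of_nonneg hη₀, real_inner_comm]
  have hstep : (η * ‖g' x - g' y‖) ^ 2 ≤ 2 * (η * ⟪g' x - g' y, x - y⟫) :=
    calc (η * ‖g' x - g' y‖) ^ 2 = η * η * ‖g' x - g' y‖ ^ 2 := by ring
      _ ≤ η * (2 / β) * ‖g' x - g' y‖ ^ 2 := by gcongr
      _ ≤ η * (2 / β) * (β * ⟪g' x - g' y, x - y⟫) := by gcongr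
      _ = 2 * (η * ⟪g' x - g' y, x - y⟫) := by field_simp
  linarith

end SmoothConvex

namespace DSGD

theorem le_sum_mul_pow_of_le_mul_add {a b : ℕ → ℝ} {lam : ℝ} {T : ℕ} (hlam : 0 ≤ lam)
    (h₁ : a 1 ≤ 0) (hstep : ∀ t, 1 ≤ t → t ≤ T → a (t + 1) ≤ lam * a t + b t) :
    ∀ t ≤ T, a (t + 1) ≤ ∑ q ∈ Icc 1 t, b q * lam ^ (t - q) := by
  intro t ht
  induction t with
  | zero => simpa using h₁
  | succ t ih =>
    calc a (t + 1 + 1) ≤ lam * a (t + 1) + b (t + 1) := hstep _ (by omega) ht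
      _ ≤ lam * ∑ q ∈ Icc 1 t, b q * lam ^ (t - q) + b (t + 1) := by
          gcongr; exact ih (by omega)
      _ = ∑ q ∈ Icc 1 (t + 1), b q * lam ^ (t + 1 - q) := by
          rw [sum_Icc_succ_top (by omega), mul_sum, Nat.sub_self, pow_zero, mul_one]
          congr 1
          refine sum_congr rfl fun q hq => ?_
          rw [Nat.sub_add_comm (mem_Icc.1 hq).2, pow_succ]
          ring

section Normed

variable {H : Type*} [NormedAddCommGroup H] {m : ℕ}

theorem sum_norm_le_sqrt_mul_sqrt_sum_sq (x : Fin m → H) :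
    ∑ i, ‖x i‖ ≤ √m * √(∑ i, ‖x i‖ ^ 2) := by
  simpa using Real.sum_mul_le_sqrt_mul_sqrt univ (fun _ => 1) (fun i => ‖x i‖)

theorem sqrt_sum_norm_add_sq_le (x y : Fin m → H) :
    √(∑ i, ‖x i + y i‖ ^ 2) ≤ √(∑ i, ‖x i‖ ^ 2) + √(∑ i, ‖y i‖ ^ 2) := by
  simpa [PiLp.norm_eq_of_L2] using norm_add_le (WithLp.toLp 2 x) (WithLp.toLp 2 y)

theorem sqrt_sum_norm_sq_le {x : Fin m → H} {C : ℝ} (hC : 0 ≤ C) (hx : ∀ i, ‖x i‖ ≤ C) :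
    √(∑ i, ‖x i‖ ^ 2) ≤ √m * C := by
  rw [← Real.sqrt_sq hC, ← Real.sqrt_mul (Nat.cast_nonneg m)]
  gcongr
  calc ∑ i, ‖x i‖ ^ 2 ≤ ∑ _i : Fin m, C ^ 2 := by gcongr with i; exact hx i
    _ = m * C ^ 2 := by simp

theorem sum_norm_sub_le_of_agree_off {Z : Type*} {n : ℕ} {F : Z → H} {L : ℝ}
    (hF : ∀ z, ‖F z‖ ≤ L) {S S' : Fin m → Fin n → Z} {r : Fin m} {k : Fin n}
    (hSS' : ∀ r' k', (r', k') ≠ (r, k) → S' r' k' = S r' k') (j : Fin m → Fin n) :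
    ∑ i, ‖F (S' i (j i)) - F (S i (j i))‖ ≤ 2 * L * (if j r = k then 1 else 0) := by
  rw [sum_eq_single_of_mem r (mem_univ r) fun i _ hi => by
    rw [hSS' i (j i) (by simp [hi]), sub_self, norm_zero]]
  split_ifs with h
  · linarith [norm_sub_le (F (S' r (j r))) (F (S r (j r))), hF (S' r (j r)), hF (S r (j r))]
  · rw [hSS' r (j r) (by simp [h]), sub_self, norm_zero, mul_zero]

variable [NormedSpace ℝ H]

noncomputable def nodeMean (x : Fin m → H) : H := (m : ℝ)⁻¹ • ∑ i, x i

noncomputable def consensusError (x : Fin m → H) : ℝ := √(∑ i, ‖x i - nodeMean x‖ ^ 2)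

theorem nodeMean_const (hm : 0 < m) (c : H) : nodeMean (fun _ : Fin m => c) = c := by
  have hm' : (m : ℝ) ≠ 0 := Nat.cast_ne_zero.2 hm.ne'
  simp [nodeMean, ← Nat.cast_smul_eq_nsmul ℝ, smul_smul, hm']

theorem sum_sub_nodeMean (hm : 0 < m) (x : Fin m → H) : ∑ i, (x i - nodeMean x) = 0 := by
  have hm' : (m : ℝ) ≠ 0 := Nat.cast_ne_zero.2 hm.ne'
  simp [nodeMean, sum_sub_distrib, ← Nat.cast_smul_eq_nsmul ℝ, smul_smul, hm']

theorem norm_nodeMean_le (hm : 0 < m) {x : Fin m → H} {L : ℝ} (hx : ∀ i, ‖x i‖ ≤ L) :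
    ‖nodeMean x‖ ≤ L := by
  calc ‖nodeMean x‖ ≤ (m : ℝ)⁻¹ * ∑ i, ‖x i‖ := by
        rw [nodeMean, norm_smul, norm_inv, Real.norm_natCast]
        gcongr
        exact norm_sum_le _ _
    _ ≤ (m : ℝ)⁻¹ * ∑ _i : Fin m, L := by gcongr with i; exact hx i
    _ = L := by simp [field]

section Gossip

variable {P : Fin m → Fin m → ℝ} {η lam L : ℝ} {x x' G : Fin m → H}

theorem nodeMean_gossip (hPcol : ∀ l, ∑ i, P i l = 1)
    (hx' : ∀ i, x' i = ∑ l, P i l • x l - η • G i) :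
    nodeMean x' = nodeMean x - η • nodeMean G := by
  have hmix : ∑ i, ∑ l, P i l • x l = ∑ l, x l := by
    rw [sum_comm]
    exact sum_congr rfl fun l _ => by rw [← sum_smul, hPcol l, one_smul]
  simp only [nodeMean, hx', sum_sub_distrib, ← smul_sum, hmix, smul_sub, smul_comm η]

theorem consensusError_gossip_le (hm : 0 < m) (hProw : ∀ i, ∑ l, P i l = 1)
    (hPcol : ∀ l, ∑ i, P i l = 1)
    (hspec : ∀ u : Fin m → H, ∑ i, u i = 0 →
      √(∑ i, ‖∑ l, P i l • u l‖ ^ 2) ≤ lam * √(∑ i, ‖u i‖ ^ 2))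
    (hη : 0 ≤ η) (hG : ∀ i, ‖G i‖ ≤ L) (hx' : ∀ i, x' i = ∑ l, P i l • x l - η • G i) :
    consensusError x' ≤ lam * consensusError x + η * (2 * L * √m) := by
  have hL : 0 ≤ L := (norm_nonneg _).trans (hG ⟨0, hm⟩)
  -- the mixing step fixes the mean, so it acts on the deviations from the mean
  have hdev : ∀ i, x' i - nodeMean x' =
      ∑ l, P i l • (x l - nodeMean x) + (-η) • (G i - nodeMean G) := fun i => by
    rw [nodeMean_gossip hPcol hx', hx', sum_congr rfl fun l _ => smul_sub (P i l) _ _,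
      sum_sub_distrib, ← sum_smul, hProw i, one_smul]
    module
  have hGdev : ∀ i, ‖(-η) • (G i - nodeMean G)‖ ≤ η * (2 * L) := fun i => by
    rw [norm_smul, norm_neg, Real.norm_of_nonneg hη]
    gcongr
    linarith [norm_sub_le (G i) (nodeMean G), hG i, norm_nodeMean_le hm hG]
  calc consensusError x'
      ≤ √(∑ i, ‖∑ l, P i l • (x l - nodeMean x)‖ ^ 2)
          + √(∑ i, ‖(-η) • (G i - nodeMean G)‖ ^ 2) := by
        rw [consensusError, sum_congr rfl fun i _ => by rw [hdev i]]
        exact sqrt_sum_norm_add_sq_le _ _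
    _ ≤ lam * consensusError x + √m * (η * (2 * L)) := by
        gcongr
        · exact hspec _ (sum_sub_nodeMean hm x)
        · exact sqrt_sum_norm_sq_le (by positivity) hGdev
    _ = lam * consensusError x + η * (2 * L * √m) := by ring

end Gossip

section Trajectory

variable {P : Fin m → Fin m → ℝ} {lam L : ℝ} {T : ℕ} {η : ℕ → ℝ}

theorem consensusError_le (hm : 0 < m) (hProw : ∀ i, ∑ l, P i l = 1)
    (hPcol : ∀ l, ∑ i, P i l = 1)
    (hspec : ∀ u : Fin m → H, ∑ i, u i = 0 →
      √(∑ i, ‖∑ l, P i l • u l‖ ^ 2) ≤ lam * √(∑ i, ‖u i‖ ^ 2))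
    (hlam : 0 ≤ lam) (hη : ∀ t, 1 ≤ t → t ≤ T → 0 ≤ η t) {G : ℕ → Fin m → H}
    (hG : ∀ t i, ‖G t i‖ ≤ L) {x : ℕ → Fin m → H} {x₀ : H} (h₁ : ∀ i, x 1 i = x₀)
    (hx : ∀ t, 1 ≤ t → t ≤ T → ∀ i, x (t + 1) i = ∑ l, P i l • x t l - η t • G t i) :
    ∀ t, 1 ≤ t → t ≤ T + 1 →
      consensusError (x t) ≤ 2 * L * √m * ∑ q ∈ Icc 1 (t - 1), η q * lam ^ (t - q - 1) := by
  intro t ht₁ htT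
  obtain ⟨s, rfl⟩ := Nat.exists_eq_add_of_le' ht₁
  have hx₁ : consensusError (x 1) = 0 := by
    simp [consensusError, funext h₁, nodeMean_const hm]
  calc consensusError (x (s + 1)) ≤ ∑ q ∈ Icc 1 s, η q * (2 * L * √m) * lam ^ (s - q) :=
        le_sum_mul_pow_of_le_mul_add (a := fun t => consensusError (x t)) hlam hx₁.le
          (fun t ht₁ htT => consensusError_gossip_le hm hProw hPcol hspec (hη t ht₁ htT) (hG t)
            (hx t ht₁ htT)) s (by omega)
    _ = 2 * L * √m * ∑ q ∈ Icc 1 (s + 1 - 1), η q * lam ^ (s + 1 - q - 1) := by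
        rw [Nat.add_sub_cancel, mul_sum]
        exact sum_congr rfl fun q _ => by rw [Nat.sub_right_comm, Nat.add_sub_cancel]; ring

end Trajectory

section Stability

variable {P : Fin m → Fin m → ℝ} {η β : ℝ} {x x' y y' : Fin m → H}

theorem norm_nodeMean_gossip_sub_le (hm : 0 < m) (hPcol : ∀ l, ∑ i, P i l = 1) (hη : 0 ≤ η)
    {g₁ g₂ : Fin m → H → H} (hne : ∀ i a b, ‖a - η • g₁ i a - (b - η • g₁ i b)‖ ≤ ‖a - b‖)
    (hg₁ : ∀ i a b, ‖g₁ i a - g₁ i b‖ ≤ β * ‖a - b‖)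
    (hg₂ : ∀ i a b, ‖g₂ i a - g₂ i b‖ ≤ β * ‖a - b‖)
    (hx' : ∀ i, x' i = ∑ l, P i l • x l - η • g₁ i (x i))
    (hy' : ∀ i, y' i = ∑ l, P i l • y l - η • g₂ i (y i)) :
    ‖nodeMean x' - nodeMean y'‖ ≤ ‖nodeMean x - nodeMean y‖ + η / m *
      (β * ∑ i, ‖x i - nodeMean x‖ + β * ∑ i, ‖y i - nodeMean y‖
        + ∑ i, ‖g₂ i (nodeMean y) - g₁ i (nodeMean y)‖) := by
  set a := nodeMean x
  set b := nodeMean y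
  set E : Fin m → H := fun i =>
    (g₁ i (x i) - g₁ i a) - (g₂ i (y i) - g₂ i b) - (g₂ i b - g₁ i b)
  have hsplit : nodeMean x' - nodeMean y' =
      (m : ℝ)⁻¹ • ∑ i, ((a - η • g₁ i a - (b - η • g₁ i b)) - η • E i) := by
    have hconst : (m : ℝ)⁻¹ • ∑ _i : Fin m, (a - b) = a - b := nodeMean_const hm (a - b)
    rw [nodeMean_gossip hPcol hx', nodeMean_gossip hPcol hy']
    have hnode : ∀ i, a - η • g₁ i a - (b - η • g₁ i b) - η • E i =
        (a - b) - η • (g₁ i (x i) - g₂ i (y i)) := fun i => by simp only [E]; module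
    rw [sum_congr rfl fun i _ => hnode i, sum_sub_distrib, ← smul_sum, smul_sub, hconst,
      sum_sub_distrib]
    simp only [nodeMean, a, b]
    module
  have hE : ∀ i, ‖E i‖ ≤ β * ‖x i - a‖ + β * ‖y i - b‖ + ‖g₂ i b - g₁ i b‖ := fun i =>
    (norm_sub_le _ _).trans (add_le_add ((norm_sub_le _ _).trans
      (add_le_add (hg₁ i _ _) (hg₂ i _ _))) le_rfl)
  calc ‖nodeMean x' - nodeMean y'‖
      ≤ (m : ℝ)⁻¹ * ∑ i, (‖a - b‖ + η * ‖E i‖) := by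
        rw [hsplit, norm_smul, norm_inv, Real.norm_natCast]
        gcongr
        refine (norm_sum_le _ _).trans (sum_le_sum fun i _ => ?_)
        refine (norm_sub_le _ _).trans (add_le_add (hne i a b) ?_)
        rw [norm_smul, Real.norm_of_nonneg hη]
    _ ≤ (m : ℝ)⁻¹ * ∑ i,
          (‖a - b‖ + η * (β * ‖x i - a‖ + β * ‖y i - b‖ + ‖g₂ i b - g₁ i b‖)) := by
        gcongr with i; exact hE i
    _ = ‖a - b‖ + η / m * (β * ∑ i, ‖x i - a‖ + β * ∑ i, ‖y i - b‖
          + ∑ i, ‖g₂ i b - g₁ i b‖) := by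
        simp only [sum_add_distrib, ← mul_sum, sum_const, card_univ, Fintype.card_fin,
          nsmul_eq_mul]
        field_simp

end Stability

end Normed

theorem norm_nodeMean_sgd_step_sub_le {H : Type*} [NormedAddCommGroup H]
    [InnerProductSpace ℝ H] {Z : Type*} {f : Z → H → ℝ} {f' : Z → H → H} {L β : ℝ}
    (hβ : 0 < β) (hdiff : ∀ z x, HasFDerivAt (f z) (innerSL ℝ (f' z x)) x)
    (hgradbd : ∀ z x, ‖f' z x‖ ≤ L) (hsmooth : ∀ z x y, ‖f' z x - f' z y‖ ≤ β * ‖x - y‖)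
    (hconv : ∀ z, ConvexOn ℝ Set.univ (f z)) {m n : ℕ} (hm : 0 < m)
    {P : Fin m → Fin m → ℝ} (hPcol : ∀ l, ∑ i, P i l = 1) {r : Fin m} {k : Fin n}
    {S S' : Fin m → Fin n → Z} (hSS' : ∀ r' k', (r', k') ≠ (r, k) → S' r' k' = S r' k')
    (j : Fin m → Fin n) {η σ : ℝ} (hη₀ : 0 ≤ η) (hη : η ≤ 2 / β) {x x' y y' : Fin m → H}
    (hx : consensusError x ≤ 2 * L * √m * σ) (hy : consensusError y ≤ 2 * L * √m * σ)
    (hx' : ∀ i, x' i = ∑ l, P i l • x l - η • f' (S i (j i)) (x i))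
    (hy' : ∀ i, y' i = ∑ l, P i l • y l - η • f' (S' i (j i)) (y i)) :
    ‖nodeMean x' - nodeMean y'‖ ≤ ‖nodeMean x - nodeMean y‖
      + η * (4 * β * L * σ + 2 * L / m * (if j r = k then 1 else 0)) := by
  have hl1 : ∀ u : Fin m → H, consensusError u ≤ 2 * L * √m * σ →
      ∑ i, ‖u i - nodeMean u‖ ≤ 2 * L * m * σ := fun u hu =>
    calc ∑ i, ‖u i - nodeMean u‖ ≤ √m * consensusError u := sum_norm_le_sqrt_mul_sqrt_sum_sq _
      _ ≤ √m * (2 * L * √m * σ) := by gcongr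
      _ = 2 * L * m * σ := by
          linear_combination (2 * L * σ) * Real.mul_self_sqrt (Nat.cast_nonneg (α := ℝ) m)
  calc ‖nodeMean x' - nodeMean y'‖
      ≤ ‖nodeMean x - nodeMean y‖ + η / m * (β * ∑ i, ‖x i - nodeMean x‖
          + β * ∑ i, ‖y i - nodeMean y‖
          + ∑ i, ‖f' (S' i (j i)) (nodeMean y) - f' (S i (j i)) (nodeMean y)‖) :=
        norm_nodeMean_gossip_sub_le hm hPcol hη₀ (g₁ := fun i => f' (S i (j i)))
          (g₂ := fun i => f' (S' i (j i)))
          (fun _ => norm_sub_smul_sub_sub_smul_le hβ (hconv _) (hdiff _) (hsmooth _) hη₀ hη)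
          (fun _ => hsmooth _) (fun _ => hsmooth _) hx' hy'
    _ ≤ ‖nodeMean x - nodeMean y‖ + η / m * (β * (2 * L * m * σ) + β * (2 * L * m * σ)
          + 2 * L * (if j r = k then 1 else 0)) := by
        gcongr
        exacts [hl1 x hx, hl1 y hy, sum_norm_sub_le_of_agree_off (fun z => hgradbd z _) hSS' j]
    _ = ‖nodeMean x - nodeMean y‖
          + η * (4 * β * L * σ + 2 * L / m * (if j r = k then 1 else 0)) := by
        field_simp
        ring

end DSGD

theorem dsgd_stability_convex_general
    {H : Type*} [NormedAddCommGroup H] [InnerProductSpace ℝ H]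
    {Z : Type*} (f : Z → H → ℝ) (f' : Z → H → H)
    (L β : ℝ) (hL : 0 < L) (hβ : 0 < β)
    (hdiff : ∀ (z : Z) (x : H), HasFDerivAt (f z) ((innerSL ℝ) (f' z x)) x)
    (hlip : ∀ (z : Z) (x y : H), |f z x - f z y| ≤ L * ‖x - y‖)
    (hgradbd : ∀ (z : Z) (x : H), ‖f' z x‖ ≤ L)
    (hsmooth : ∀ (z : Z) (x y : H), ‖f' z x - f' z y‖ ≤ β * ‖x - y‖)
    (hconv : ∀ z : Z, ConvexOn ℝ Set.univ (f z))
    (m n T : ℕ) (hm : 1 ≤ m)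
    (P : Fin m → Fin m → ℝ)
    (hPsym : ∀ i l, P i l = P l i)
    (hProw : ∀ i, ∑ l, P i l = 1)
    (lam : ℝ) (hlam0 : 0 ≤ lam)
    (hspec : ∀ vv : Fin m → H, ∑ i, vv i = 0 →
      Real.sqrt (∑ i, ‖∑ l, P i l • vv l‖ ^ 2) ≤ lam * Real.sqrt (∑ i, ‖vv i‖ ^ 2))
    (r : Fin m) (k : Fin n)
    (S S' : Fin m → Fin n → Z)
    (hSS' : ∀ (r' : Fin m) (k' : Fin n), (r', k') ≠ (r, k) → S' r' k' = S r' k')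
    (j : ℕ → Fin m → Fin n)
    (η : ℕ → ℝ) (hηpos : ∀ t, 1 ≤ t → t ≤ T → 0 < η t)
    (hηβ : ∀ t, 1 ≤ t → t ≤ T → η t ≤ 2 / β)
    (w₀ : H) (w v : ℕ → Fin m → H)
    (hw1 : ∀ i, w 1 i = w₀) (hv1 : ∀ i, v 1 i = w₀)
    (hwrec : ∀ t, 1 ≤ t → t ≤ T → ∀ i,
      w (t + 1) i = ∑ l, P i l • w t l - η t • f' (S i (j t i)) (w t i))
    (hvrec : ∀ t, 1 ≤ t → t ≤ T → ∀ i,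
      v (t + 1) i = ∑ l, P i l • v t l - η t • f' (S' i (j t i)) (v t i))
    :
    ∀ z : Z,
      |f z ((m : ℝ)⁻¹ • ∑ i, w (T + 1) i) - f z ((m : ℝ)⁻¹ • ∑ i, v (T + 1) i)| ≤
        4 * β * L ^ 2 * (∑ t ∈ Finset.Icc 1 T, η t * ∑ q ∈ Finset.Icc 1 (t - 1), η q * lam ^ (t - q - 1))
          + 2 * L ^ 2 / m * ∑ t ∈ Finset.Icc 1 T, η t * (if j t r = k then (1 : ℝ) else 0) := by
  intro z
  have hPcol : ∀ l, ∑ i, P i l = 1 := fun l =>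
    (sum_congr rfl fun i _ => hPsym i l).trans (hProw l)
  have hη₀ : ∀ t, 1 ≤ t → t ≤ T → 0 ≤ η t := fun t h₁ h₂ => (hηpos t h₁ h₂).le
  have hcons_w := DSGD.consensusError_le hm hProw hPcol hspec hlam0 hη₀
    (fun t i => hgradbd (S i (j t i)) (w t i)) hw1 hwrec
  have hcons_v := DSGD.consensusError_le hm hProw hPcol hspec hlam0 hη₀
    (fun t i => hgradbd (S' i (j t i)) (v t i)) hv1 hvrec
  have hgap := DSGD.le_sum_mul_pow_of_le_mul_add
    (a := fun t => ‖DSGD.nodeMean (w t) - DSGD.nodeMean (v t)‖) zero_le_one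
    (by rw [show w 1 = v 1 from funext fun i => (hw1 i).trans (hv1 i).symm, sub_self, norm_zero])
    (fun t h₁ h₂ => by
      rw [one_mul]
      exact DSGD.norm_nodeMean_sgd_step_sub_le hβ hdiff hgradbd hsmooth hconv hm hPcol hSS' (j t)
        (hη₀ t h₁ h₂) (hηβ t h₁ h₂) (hcons_w t h₁ (by omega)) (hcons_v t h₁ (by omega))
        (hwrec t h₁ h₂) (hvrec t h₁ h₂)) T le_rfl
  calc _ ≤ L * ‖DSGD.nodeMean (w (T + 1)) - DSGD.nodeMean (v (T + 1))‖ := hlip z _ _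
    _ ≤ L * ∑ t ∈ Icc 1 T, η t * (4 * β * L * ∑ q ∈ Icc 1 (t - 1), η q * lam ^ (t - q - 1)
          + 2 * L / m * (if j t r = k then 1 else 0)) * 1 ^ (T - t) := by gcongr
    _ = _ := by
        simp only [one_pow, mul_one]
        rw [mul_sum, mul_sum, mul_sum, ← sum_add_distrib]
        exact sum_congr rfl fun t _ => by ring

/-- Theorem: pointwise stability of D-SGD, convex case, general stepsizes. -/
theorem dsgd_stability_convex
    {H : Type*} [NormedAddCommGroup H] [InnerProductSpace ℝ H]
    {Z : Type*} (f : Z → H → ℝ) (f' : Z → H → H)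
    (L β : ℝ) (hL : 0 < L) (hβ : 0 < β)
    (hdiff : ∀ (z : Z) (x : H), HasFDerivAt (f z) ((innerSL ℝ) (f' z x)) x)
    (hlip : ∀ (z : Z) (x y : H), |f z x - f z y| ≤ L * ‖x - y‖)
    (hgradbd : ∀ (z : Z) (x : H), ‖f' z x‖ ≤ L)
    (hsmooth : ∀ (z : Z) (x y : H), ‖f' z x - f' z y‖ ≤ β * ‖x - y‖)
    (hconv : ∀ z : Z, ConvexOn ℝ Set.univ (f z))
    (m n T : ℕ) (hm : 1 ≤ m) (hn : 1 ≤ n) (hT : 1 ≤ T)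
    (P : Fin m → Fin m → ℝ)
    (hPsym : ∀ i l, P i l = P l i)
    (hPpos : ∀ i l, 0 ≤ P i l)
    (hProw : ∀ i, ∑ l, P i l = 1)
    (lam : ℝ) (hlam0 : 0 ≤ lam) (hlam1 : lam < 1)
    (hspec : ∀ vv : Fin m → H, ∑ i, vv i = 0 →
      Real.sqrt (∑ i, ‖∑ l, P i l • vv l‖ ^ 2) ≤ lam * Real.sqrt (∑ i, ‖vv i‖ ^ 2))
    (r : Fin m) (k : Fin n)
    (S S' : Fin m → Fin n → Z)
    (hSS' : ∀ (r' : Fin m) (k' : Fin n), (r', k') ≠ (r, k) → S' r' k' = S r' k')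
    (j : ℕ → Fin m → Fin n)
    (η : ℕ → ℝ) (hηpos : ∀ t, 1 ≤ t → t ≤ T → 0 < η t)
    (hηβ : ∀ t, 1 ≤ t → t ≤ T → η t ≤ 2 / β)
    (w₀ : H) (w v : ℕ → Fin m → H)
    (hw1 : ∀ i, w 1 i = w₀) (hv1 : ∀ i, v 1 i = w₀)
    (hwrec : ∀ t, 1 ≤ t → t ≤ T → ∀ i,
      w (t + 1) i = ∑ l, P i l • w t l - η t • f' (S i (j t i)) (w t i))
    (hvrec : ∀ t, 1 ≤ t → t ≤ T → ∀ i,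
      v (t + 1) i = ∑ l, P i l • v t l - η t • f' (S' i (j t i)) (v t i))
    :
    ∀ z : Z,
      |f z ((m : ℝ)⁻¹ • ∑ i, w (T + 1) i) - f z ((m : ℝ)⁻¹ • ∑ i, v (T + 1) i)| ≤
        4 * β * L ^ 2 * (∑ t ∈ Finset.Icc 1 T, η t * ∑ q ∈ Finset.Icc 1 (t - 1), η q * lam ^ (t - q - 1))
          + 2 * L ^ 2 / m * ∑ t ∈ Finset.Icc 1 T, η t * (if j t r = k then (1 : ℝ) else 0) :=
  dsgd_stability_convex_general f f' L β hL hβ hdiff hlip hgradbd hsmooth hconv m n T hm P hPsym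
    hProw lam hlam0 hspec r k S S' hSS' j η hηpos hηβ w₀ w v hw1 hv1 hwrec hvrec
end

section
/- Assume f is convex, L-Lipschitz and β-smooth, P is a gossip matrix with spectral bound λ satisfying 0 < λ < 1, the stepsizes are η_t = 1/(t+1), and 1/(t+1) ≤ 2/β for every t ∈ {1,…,T} (equivalently β ≤ 4). Then for every z ∈ 𝒵, |f(w̄^{T+1}; z) − f(v̄^{T+1}; z)| ≤ 4βL²C_λ · T/(T+1) + (2L²/m) ∑_{t=1}^T 𝟙[j_t(r)=k]/(t+1). -/
noncomputable def Clam (lam : ℝ) : ℝ :=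
  (1 / (lam * Real.log (1 / lam))) * (8 / (Real.exp 1 ^ 2 * Real.log (1 / lam)) + 2)

open scoped RealInnerProductSpace

/-!
Since a symmetric gossip matrix is doubly stochastic, the network averages `w̄ᵗ`, `v̄ᵗ` move by
a gradient step along the machine-averaged gradient. Evaluating all those gradients at the
averages instead gives a non-expansive map for `η ≤ 2/β`, by co-coercivity of gradients of
convex `β`-smooth functions. What is left over is `β` times the consensus errors
`‖wᵗ(i) - w̄ᵗ‖`, `‖vᵗ(i) - v̄ᵗ‖`, which the spectral gap bounds on average by `2 L Kₜ` with
`Kₜ = ∑_{s<t} λ^{t-1-s} η_s`, and `2L/m` at the steps where machine `r` draws sample `k`.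
Finally `ηₜ₊₁ Kₜ₊₁ ≤ λ ηₜ Kₜ + ηₜ ηₜ₊₁` gives
`∑ ηₜ Kₜ ≤ (1 - λ)⁻¹ ∑ 1/(t(t+1)) = (1 - λ)⁻¹ T/(T+1)`, and `(1 - λ)⁻¹ ≤ C_λ` because
`λ log(1/λ) ≤ 1 - λ`.
-/

open Set

section GradientInequalities

variable {H : Type*} [NormedAddCommGroup H] [InnerProductSpace ℝ H]
  {f : H → ℝ} {f' : H → H} {β : ℝ}

theorem hasDerivAt_comp_lineMap (hf : ∀ x, HasFDerivAt f (innerSL ℝ (f' x)) x) (x y : H)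
    (s : ℝ) :
    HasDerivAt (f ∘ AffineMap.lineMap x y) ⟪f' (AffineMap.lineMap x y s), y - x⟫ s :=
  (hf _).comp_hasDerivAt s AffineMap.hasDerivAt_lineMap

theorem ConvexOn.add_inner_gradient_le (hf : ∀ x, HasFDerivAt f (innerSL ℝ (f' x)) x)
    (hconv : ConvexOn ℝ univ f) (x y : H) : f x + ⟪f' x, y - x⟫ ≤ f y := by
  have h := (hconv.comp_affineMap (AffineMap.lineMap x y)).le_slope_of_hasDerivAt
    (mem_univ 0) (mem_univ 1) zero_lt_one (hasDerivAt_comp_lineMap hf x y 0)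
  simp only [slope_def_field, Function.comp, AffineMap.lineMap_apply_zero,
    AffineMap.lineMap_apply_one, sub_zero, div_one] at h
  linarith

theorem le_add_inner_add_sq_of_gradient_lipschitz (hf : ∀ x, HasFDerivAt f (innerSL ℝ (f' x)) x)
    (hsmooth : ∀ x y, ‖f' x - f' y‖ ≤ β * ‖x - y‖) (x y : H) :
    f y ≤ f x + ⟪f' x, y - x⟫ + β / 2 * ‖y - x‖ ^ 2 := by
  set φ : ℝ → ℝ := fun s => f (AffineMap.lineMap x y s) - s * ⟪f' x, y - x⟫
  have hφ : ∀ s, HasDerivAt φ (⟪f' (AffineMap.lineMap x y s), y - x⟫ - ⟪f' x, y - x⟫) s := fun s =>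
    (hasDerivAt_comp_lineMap hf x y s).sub
      (by simpa using (hasDerivAt_id s).mul_const ⟪f' x, y - x⟫)
  have hB : ∀ s, HasDerivAt (fun s => φ 0 + β / 2 * ‖y - x‖ ^ 2 * s ^ 2)
      (β * ‖y - x‖ ^ 2 * s) s := fun s =>
    (((hasDerivAt_pow 2 s).const_mul (β / 2 * ‖y - x‖ ^ 2)).const_add (φ 0)).congr_deriv
      (by push_cast; ring)
  have hbound : ∀ s ∈ Ico (0 : ℝ) 1,
      ⟪f' (AffineMap.lineMap x y s), y - x⟫ - ⟪f' x, y - x⟫ ≤ β * ‖y - x‖ ^ 2 * s := by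
    intro s hs
    rw [← inner_sub_left]
    calc ⟪f' (AffineMap.lineMap x y s) - f' x, y - x⟫
        ≤ ‖f' (AffineMap.lineMap x y s) - f' x‖ * ‖y - x‖ := real_inner_le_norm _ _
      _ ≤ β * ‖AffineMap.lineMap x y s - x‖ * ‖y - x‖ := by gcongr; exact hsmooth _ _
      _ = β * ‖y - x‖ ^ 2 * s := by
        rw [AffineMap.lineMap_apply_module', add_sub_cancel_right, norm_smul,
          Real.norm_of_nonneg hs.1]
        ring
  have h := image_le_of_deriv_right_le_deriv_boundary (f := φ)
    (B := fun s => φ 0 + β / 2 * ‖y - x‖ ^ 2 * s ^ 2)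
    (fun s _ => (hφ s).continuousAt.continuousWithinAt) (fun s _ => (hφ s).hasDerivWithinAt)
    (by simp) (fun s _ => (hB s).continuousAt.continuousWithinAt)
    (fun s _ => (hB s).hasDerivWithinAt)
    hbound (right_mem_Icc.2 zero_le_one)
  simp only [φ, AffineMap.lineMap_apply_zero, AffineMap.lineMap_apply_one, zero_mul, sub_zero,
    one_mul, one_pow, mul_one] at h
  linarith


theorem ConvexOn.add_inner_add_sq_norm_gradient_sub_le
    (hf : ∀ x, HasFDerivAt f (innerSL ℝ (f' x)) x)
    (hsmooth : ∀ x y, ‖f' x - f' y‖ ≤ β * ‖x - y‖) (hconv : ConvexOn ℝ univ f) (hβ : 0 < β)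
    (x y : H) : f x + ⟪f' x, y - x⟫ + (2 * β)⁻¹ * ‖f' y - f' x‖ ^ 2 ≤ f y := by
  set d := f' y - f' x
  -- compare both first-order bounds at the gradient step `y - β⁻¹ • d` from `y`
  have hlow := hconv.add_inner_gradient_le hf x (y - β⁻¹ • d)
  have hup := le_add_inner_add_sq_of_gradient_lipschitz hf hsmooth y (y - β⁻¹ • d)
  have hd : ⟪f' y, d⟫ - ⟪f' x, d⟫ = ‖d‖ ^ 2 := by
    rw [← inner_sub_left, real_inner_self_eq_norm_sq]
  rw [sub_right_comm, inner_sub_right, real_inner_smul_right] at hlow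
  rw [sub_sub_cancel_left, inner_neg_right, real_inner_smul_right, norm_neg, norm_smul,
    Real.norm_of_nonneg (inv_nonneg.2 hβ.le)] at hup
  have hsq : β / 2 * (β⁻¹ * ‖d‖) ^ 2 = (2 * β)⁻¹ * ‖d‖ ^ 2 := by field_simp
  have hlin : β⁻¹ * ⟪f' y, d⟫ - β⁻¹ * ⟪f' x, d⟫ = 2 * ((2 * β)⁻¹ * ‖d‖ ^ 2) := by
    rw [← mul_sub, hd]; field_simp
  linarith

theorem ConvexOn.sq_norm_gradient_sub_le
    (hf : ∀ x, HasFDerivAt f (innerSL ℝ (f' x)) x)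
    (hsmooth : ∀ x y, ‖f' x - f' y‖ ≤ β * ‖x - y‖) (hconv : ConvexOn ℝ univ f) (hβ : 0 < β)
    (x y : H) : ‖f' x - f' y‖ ^ 2 ≤ β * ⟪f' x - f' y, x - y⟫ := by
  have hxy := hconv.add_inner_add_sq_norm_gradient_sub_le hf hsmooth hβ x y
  have hyx := hconv.add_inner_add_sq_norm_gradient_sub_le hf hsmooth hβ y x
  rw [norm_sub_rev] at hxy
  have hinner : ⟪f' x - f' y, x - y⟫ = -⟪f' x, y - x⟫ - ⟪f' y, x - y⟫ := by
    rw [inner_sub_left, ← neg_sub x y, inner_neg_right]; ring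
  have h : β⁻¹ * ‖f' x - f' y‖ ^ 2 ≤ ⟪f' x - f' y, x - y⟫ := by
    rw [hinner, show β⁻¹ = 2 * (2 * β)⁻¹ by field_simp]; linarith
  calc ‖f' x - f' y‖ ^ 2 = β * (β⁻¹ * ‖f' x - f' y‖ ^ 2) := by field_simp
    _ ≤ β * ⟪f' x - f' y, x - y⟫ := by gcongr

theorem norm_sub_smul_le_of_sq_norm_le_inner {u d : H} (hβ : 0 < β)
    (hd : ‖d‖ ^ 2 ≤ β * ⟪d, u⟫) {η : ℝ} (hη0 : 0 ≤ η) (hη : η ≤ 2 / β) :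
    ‖u - η • d‖ ≤ ‖u‖ := by
  have hηβ : η * β ≤ 2 := by rwa [le_div_iff₀ hβ] at hη
  have hdu : 0 ≤ ⟪d, u⟫ := by nlinarith [sq_nonneg ‖d‖]
  refine pow_le_pow_iff_left₀ (norm_nonneg _) (norm_nonneg _) two_ne_zero |>.1 ?_
  rw [norm_sub_sq_real, norm_smul, real_inner_smul_right, real_inner_comm, Real.norm_of_nonneg hη0]
  nlinarith [mul_le_mul_of_nonneg_left hd (sq_nonneg η), mul_le_mul_of_nonneg_right hηβ
    (mul_nonneg hη0 hdu)]

end GradientInequalities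

section Average

variable {ι : Type*} [Fintype ι]

noncomputable def avg {M : Type*} [AddCommMonoid M] [Module ℝ M] (x : ι → M) : M :=
  (Fintype.card ι : ℝ)⁻¹ • ∑ i, x i

theorem avg_le_avg {a b : ι → ℝ} (h : ∀ i, a i ≤ b i) : avg a ≤ avg b := by
  unfold avg
  gcongr with i
  exact h i

theorem sq_avg_le_avg_sq (a : ι → ℝ) : avg a ^ 2 ≤ avg (fun i => a i ^ 2) := by
  simpa [avg, div_eq_inv_mul] using
    sum_div_card_sq_le_sum_sq_div_card (s := Finset.univ) (f := a)

variable {E : Type*} [SeminormedAddCommGroup E]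

theorem avg_le_of_norm_toLp_le [Nonempty ι] {x : ι → E} {C : ℝ} (hC : 0 ≤ C)
    (h : ‖WithLp.toLp 2 x‖ ≤ √(Fintype.card ι) * C) : avg (fun i => ‖x i‖) ≤ C := by
  have hcard : (0 : ℝ) < Fintype.card ι := Nat.cast_pos.2 Fintype.card_pos
  have hsq : avg (fun i => ‖x i‖ ^ 2) ≤ C ^ 2 := by
    rw [PiLp.norm_eq_of_L2, ← Real.sqrt_sq hC, ← Real.sqrt_mul hcard.le,
      Real.sqrt_le_sqrt_iff (by positivity)] at h
    calc avg (fun i => ‖x i‖ ^ 2) ≤ (Fintype.card ι : ℝ)⁻¹ * (Fintype.card ι * C ^ 2) := by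
          rw [avg, smul_eq_mul]; gcongr
      _ = C ^ 2 := inv_mul_cancel_left₀ hcard.ne' _
  exact (pow_le_pow_iff_left₀ (by unfold avg; positivity) hC two_ne_zero).1
    ((sq_avg_le_avg_sq _).trans hsq)

theorem norm_toLp_le_sqrt_card_mul {x : ι → E} {C : ℝ} (hC : 0 ≤ C) (h : ∀ i, ‖x i‖ ≤ C) :
    ‖WithLp.toLp 2 x‖ ≤ √(Fintype.card ι) * C := by
  rw [PiLp.norm_eq_of_L2, ← Real.sqrt_sq hC, ← Real.sqrt_mul (Nat.cast_nonneg _)]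
  gcongr
  calc ∑ i, ‖x i‖ ^ 2 ≤ ∑ _i : ι, C ^ 2 := by gcongr with i; exact h i
    _ = _ := by simp

theorem avg_const_mul (c : ℝ) (a : ι → ℝ) : avg (fun i => c * a i) = c * avg a := by
  simp only [avg, smul_eq_mul, ← Finset.mul_sum]
  ring

variable {H : Type*} [NormedAddCommGroup H] [InnerProductSpace ℝ H]

theorem avg_const [Nonempty ι] (c : H) : avg (fun _ : ι => c) = c := by
  rw [avg, Finset.sum_const, Finset.card_univ, ← Nat.cast_smul_eq_nsmul ℝ, smul_smul,
    inv_mul_cancel₀ (Nat.cast_ne_zero.2 Fintype.card_ne_zero), one_smul]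

theorem avg_add (x y : ι → H) : avg (fun i => x i + y i) = avg x + avg y := by
  simp only [avg, Finset.sum_add_distrib, smul_add]

theorem avg_sub (x y : ι → H) : avg (fun i => x i - y i) = avg x - avg y := by
  simp only [avg, Finset.sum_sub_distrib, smul_sub]

theorem sum_sub_avg [Nonempty ι] (x : ι → H) : ∑ i, (x i - avg x) = 0 := by
  rw [Finset.sum_sub_distrib, Finset.sum_const, Finset.card_univ, ← Nat.cast_smul_eq_nsmul ℝ, avg,
    smul_smul, mul_inv_cancel₀ (Nat.cast_ne_zero.2 Fintype.card_ne_zero), one_smul, sub_self]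

theorem norm_avg_le (x : ι → H) : ‖avg x‖ ≤ avg (fun i => ‖x i‖) := by
  rw [avg, avg, norm_smul, Real.norm_of_nonneg (by positivity), smul_eq_mul]
  gcongr
  exact norm_sum_le _ _

theorem inner_avg_left (x : ι → H) (u : H) : ⟪avg x, u⟫ = avg (fun i => ⟪x i, u⟫) := by
  rw [avg, avg, real_inner_smul_left, sum_inner, smul_eq_mul]

theorem sq_norm_avg_le (x : ι → H) : ‖avg x‖ ^ 2 ≤ avg (fun i => ‖x i‖ ^ 2) :=
  (pow_le_pow_left₀ (norm_nonneg _) (norm_avg_le x) 2).trans (sq_avg_le_avg_sq _)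

end Average

section DiscountedSums

open Finset

theorem le_add_sum_Icc_of_succ_le {u c : ℕ → ℝ} {T : ℕ}
    (h : ∀ t, 1 ≤ t → t ≤ T → u (t + 1) ≤ u t + c t) : u (T + 1) ≤ u 1 + ∑ t ∈ Icc 1 T, c t := by
  induction T with
  | zero => simp
  | succ T ih =>
    rw [sum_Icc_succ_top (by omega)]
    linarith [ih fun t ht htT => h t ht (by omega), h (T + 1) (by omega) le_rfl]

theorem one_sub_mul_sum_Icc_le {lam : ℝ} (hlam : 0 ≤ lam) {E a : ℕ → ℝ} (hE : ∀ t, 0 ≤ E t)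
    (hE0 : E 0 = 0) (hrec : ∀ t, E (t + 1) ≤ lam * E t + a (t + 1)) (T : ℕ) :
    (1 - lam) * ∑ t ∈ Icc 1 T, E t ≤ ∑ t ∈ Icc 1 T, a t := by
  suffices h : (1 - lam) * ∑ t ∈ Icc 1 T, E t + lam * E T ≤ ∑ t ∈ Icc 1 T, a t by
    nlinarith [hE T]
  induction T with
  | zero => simp [hE0]
  | succ T ih =>
    rw [sum_Icc_succ_top (by omega), sum_Icc_succ_top (by omega)]
    linarith [hrec T]

theorem sum_Icc_inv_mul_inv_add_one (T : ℕ) :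
    ∑ t ∈ Icc 1 T, ((t : ℝ)⁻¹ * ((t : ℝ) + 1)⁻¹) = T / (T + 1) := by
  induction T with
  | zero => simp
  | succ T ih =>
    rw [sum_Icc_succ_top (by omega), ih]
    push_cast
    field_simp
    ring

/-- `discountedStepSum lam η t = ∑_{s < t} lam ^ (t - 1 - s) * η s`. -/
noncomputable def discountedStepSum (lam : ℝ) (η : ℕ → ℝ) : ℕ → ℝ
  | 0 => 0
  | t + 1 => lam * discountedStepSum lam η t + η t

variable {lam : ℝ} {η : ℕ → ℝ}

theorem discountedStepSum_nonneg (hlam : 0 ≤ lam) (hη : ∀ t, 0 ≤ η t) (t : ℕ) :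
    0 ≤ discountedStepSum lam η t := by
  induction t with
  | zero => exact le_rfl
  | succ t ih => exact add_nonneg (mul_nonneg hlam ih) (hη t)

theorem mul_discountedStepSum_succ_le (hlam : 0 ≤ lam) (hη0 : ∀ t, 0 ≤ η t) (hη : Antitone η)
    (t : ℕ) : η (t + 1) * discountedStepSum lam η (t + 1)
      ≤ lam * (η t * discountedStepSum lam η t) + η t * η (t + 1) := by
  have hK := discountedStepSum_nonneg hlam hη0 t
  have hηt := hη (Nat.le_succ t)
  rw [discountedStepSum]
  nlinarith [mul_le_mul_of_nonneg_right hηt (mul_nonneg hlam hK)]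

theorem sum_Icc_inv_mul_discountedStepSum_le (hlam0 : 0 ≤ lam) (hlam1 : lam < 1) (T : ℕ) :
    ∑ t ∈ Icc 1 T, ((t : ℝ) + 1)⁻¹ * discountedStepSum lam (fun s => ((s : ℝ) + 1)⁻¹) t
      ≤ (1 - lam)⁻¹ * (T / (T + 1)) := by
  have hη0 : ∀ s : ℕ, 0 ≤ ((s : ℝ) + 1)⁻¹ := fun s => by positivity
  have hη : Antitone fun s : ℕ => ((s : ℝ) + 1)⁻¹ := fun s s' h => by
    dsimp only
    gcongr
  have h := one_sub_mul_sum_Icc_le hlam0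
    (fun t => mul_nonneg (hη0 t) (discountedStepSum_nonneg hlam0 hη0 t))
    (by simp [discountedStepSum])
    (a := fun t => (t : ℝ)⁻¹ * ((t : ℝ) + 1)⁻¹)
    (fun t => (mul_discountedStepSum_succ_le hlam0 hη0 hη t).trans_eq (by push_cast; ring)) T
  rw [sum_Icc_inv_mul_inv_add_one] at h
  rwa [← le_inv_mul_iff₀ (sub_pos.2 hlam1)] at h

theorem inv_one_sub_le_Clam (hlam0 : 0 < lam) (hlam1 : lam < 1) :
    (1 - lam)⁻¹ ≤ Clam lam := by
  have hlog : 0 < Real.log (1 / lam) := Real.log_pos (by rw [lt_div_iff₀ hlam0]; linarith)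
  have hle : lam * Real.log (1 / lam) ≤ 1 - lam := by
    have := mul_le_mul_of_nonneg_left (Real.log_le_sub_one_of_pos (one_div_pos.2 hlam0)) hlam0.le
    rwa [mul_sub, mul_one_div_cancel hlam0.ne', mul_one] at this
  calc (1 - lam)⁻¹ ≤ 1 / (lam * Real.log (1 / lam)) * 1 := by
        rw [mul_one, one_div]; gcongr
    _ ≤ Clam lam := by
        unfold Clam
        gcongr
        linarith [show 0 ≤ 8 / (Real.exp 1 ^ 2 * Real.log (1 / lam)) by positivity]

end DiscountedSums

section Gossip

variable {ι : Type*} [Fintype ι] {H : Type*} [NormedAddCommGroup H] [InnerProductSpace ℝ H]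
  {P : ι → ι → ℝ}

theorem avg_gossip_step (hcol : ∀ l, ∑ i, P i l = 1) (x g : ι → H) (η : ℝ) :
    avg (fun i => ∑ l, P i l • x l - η • g i) = avg x - η • avg g := by
  have hmix : ∑ i, ∑ l, P i l • x l = ∑ l, x l := by
    rw [Finset.sum_comm]
    simp only [← Finset.sum_smul, hcol, one_smul]
  rw [avg_sub]
  congr 1
  · rw [avg, avg, hmix]
  · rw [avg, avg, ← Finset.smul_sum, smul_comm]

theorem gossip_step_sub_avg (hrow : ∀ i, ∑ l, P i l = 1) (hcol : ∀ l, ∑ i, P i l = 1)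
    (x g : ι → H) (η : ℝ) (i : ι) :
    (∑ l, P i l • x l - η • g i) - avg (fun i => ∑ l, P i l • x l - η • g i)
      = ∑ l, P i l • (x l - avg x) - η • (g i - avg g) := by
  simp only [avg_gossip_step hcol, smul_sub, Finset.sum_sub_distrib, ← Finset.sum_smul, hrow,
    one_smul]
  abel

theorem norm_toLp_sub_avg_le [Nonempty ι] (hrow : ∀ i, ∑ l, P i l = 1)
    (hcol : ∀ l, ∑ i, P i l = 1) {lam : ℝ} (hlam : 0 ≤ lam)
    (hspec : ∀ y : ι → H, ∑ i, y i = 0 →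
      ‖WithLp.toLp 2 (fun i => ∑ l, P i l • y l)‖ ≤ lam * ‖WithLp.toLp 2 y‖)
    {L : ℝ} (hL : 0 ≤ L) {η : ℕ → ℝ} (hη : ∀ t, 0 ≤ η t) {T : ℕ} {x g : ℕ → ι → H} {x₀ : H}
    (hx1 : ∀ i, x 1 i = x₀)
    (hrec : ∀ t, 1 ≤ t → t ≤ T → ∀ i, x (t + 1) i = ∑ l, P i l • x t l - η t • g t i)
    (hg : ∀ t i, ‖g t i‖ ≤ L) :
    ∀ t, 1 ≤ t → t ≤ T + 1 → ‖WithLp.toLp 2 (fun i => x t i - avg (x t))‖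
      ≤ √(Fintype.card ι) * (2 * L * discountedStepSum lam η t) := by
  intro t ht
  induction t, ht using Nat.le_induction with
  | base =>
    intro _
    have := hη 0
    simp only [funext hx1, avg_const, sub_self, discountedStepSum, mul_zero, zero_add]
    rw [← Pi.zero_def, WithLp.toLp_zero, norm_zero]
    positivity
  | succ t ht ih =>
    intro htT
    have hgdev : ∀ i, ‖g t i - avg (g t)‖ ≤ 2 * L := fun i => by
      linarith [norm_sub_le (g t i) (avg (g t)), hg t i, (norm_avg_le (g t)).trans
        (avg_le_avg (b := fun _ => L) (hg t)) |>.trans_eq (avg_const L)]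
    have hηt := hη t
    rw [funext (hrec t ht (by omega))]
    simp only [gossip_step_sub_avg hrow hcol]
    set y := fun l => x t l - avg (x t)
    calc ‖WithLp.toLp 2 ((fun i => ∑ l, P i l • y l) - η t • fun i => g t i - avg (g t))‖
        ≤ ‖WithLp.toLp 2 (fun i => ∑ l, P i l • y l)‖
          + η t * ‖WithLp.toLp 2 fun i => g t i - avg (g t)‖ := by
          rw [WithLp.toLp_sub, WithLp.toLp_smul]
          exact (norm_sub_le _ _).trans_eq (by rw [norm_smul, Real.norm_of_nonneg hηt])
      _ ≤ lam * (√(Fintype.card ι) * (2 * L * discountedStepSum lam η t))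
          + η t * (√(Fintype.card ι) * (2 * L)) := by
          gcongr ?_ + η t * ?_
          · exact (hspec y (sum_sub_avg _)).trans (by gcongr; exact ih (by omega))
          · exact norm_toLp_le_sqrt_card_mul (by positivity) hgdev
      _ = √(Fintype.card ι) * (2 * L * discountedStepSum lam η (t + 1)) := by
          rw [discountedStepSum]; ring

theorem avg_norm_sub_avg_le [Nonempty ι] (hrow : ∀ i, ∑ l, P i l = 1)
    (hcol : ∀ l, ∑ i, P i l = 1) {lam : ℝ} (hlam : 0 ≤ lam)
    (hspec : ∀ y : ι → H, ∑ i, y i = 0 →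
      ‖WithLp.toLp 2 (fun i => ∑ l, P i l • y l)‖ ≤ lam * ‖WithLp.toLp 2 y‖)
    {L : ℝ} (hL : 0 ≤ L) {η : ℕ → ℝ} (hη : ∀ t, 0 ≤ η t) {T : ℕ} {x g : ℕ → ι → H} {x₀ : H}
    (hx1 : ∀ i, x 1 i = x₀)
    (hrec : ∀ t, 1 ≤ t → t ≤ T → ∀ i, x (t + 1) i = ∑ l, P i l • x t l - η t • g t i)
    (hg : ∀ t i, ‖g t i‖ ≤ L) (t : ℕ) (ht : 1 ≤ t) (htT : t ≤ T + 1) :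
    avg (fun i => ‖x t i - avg (x t)‖) ≤ 2 * L * discountedStepSum lam η t :=
  have := discountedStepSum_nonneg hlam hη t
  avg_le_of_norm_toLp_le (by positivity)
    (norm_toLp_sub_avg_le hrow hcol hlam hspec hL hη hx1 hrec hg t ht htT)

end Gossip

section Step

variable {ι : Type*} [Fintype ι] {H : Type*} [NormedAddCommGroup H] [InnerProductSpace ℝ H]
  {F : ι → H → ℝ} {F' : ι → H → H} {β η : ℝ}

theorem norm_sub_smul_avg_gradient_sub_le (hF : ∀ i x, HasFDerivAt (F i) (innerSL ℝ (F' i x)) x)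
    (hsmooth : ∀ i x y, ‖F' i x - F' i y‖ ≤ β * ‖x - y‖) (hconv : ∀ i, ConvexOn ℝ univ (F i))
    (hβ : 0 < β) (hη0 : 0 ≤ η) (hη : η ≤ 2 / β) (X Y : H) :
    ‖(X - η • avg (fun i => F' i X)) - (Y - η • avg (fun i => F' i Y))‖ ≤ ‖X - Y‖ := by
  have hd : ‖avg (fun i => F' i X - F' i Y)‖ ^ 2 ≤ β * ⟪avg (fun i => F' i X - F' i Y), X - Y⟫ := by
    rw [inner_avg_left, ← avg_const_mul]
    exact (sq_norm_avg_le _).trans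
      (avg_le_avg fun i => (hconv i).sq_norm_gradient_sub_le (hF i) (hsmooth i) hβ X Y)
  rw [sub_sub_sub_comm, ← smul_sub, ← avg_sub]
  exact norm_sub_smul_le_of_sq_norm_le_inner hβ hd hη0 hη

theorem norm_avg_gossip_step_sub_le {P : ι → ι → ℝ} (hcol : ∀ l, ∑ i, P i l = 1)
    {G' : ι → H → H} (hF : ∀ i x, HasFDerivAt (F i) (innerSL ℝ (F' i x)) x)
    (hsmooth : ∀ i x y, ‖F' i x - F' i y‖ ≤ β * ‖x - y‖) (hconv : ∀ i, ConvexOn ℝ univ (F i))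
    (hβ : 0 < β) (hη0 : 0 ≤ η) (hη : η ≤ 2 / β) (x y : ι → H) :
    ‖avg (fun i => ∑ l, P i l • x l - η • F' i (x i))
        - avg (fun i => ∑ l, P i l • y l - η • G' i (y i))‖
      ≤ ‖avg x - avg y‖ + η * (β * avg (fun i => ‖x i - avg x‖)
        + β * avg (fun i => ‖y i - avg y‖) + avg (fun i => ‖F' i (y i) - G' i (y i)‖)) := by
  rw [avg_gossip_step hcol, avg_gossip_step hcol]
  set X := avg x
  set Y := avg y
  set δ := fun i => (F' i (x i) - F' i X) - (F' i (y i) - F' i Y) + (F' i (y i) - G' i (y i))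
  have hsplit : (X - η • avg (fun i => F' i (x i))) - (Y - η • avg (fun i => G' i (y i)))
      = ((X - η • avg (fun i => F' i X)) - (Y - η • avg (fun i => F' i Y))) - η • avg δ := by
    simp only [δ, avg_add, avg_sub]
    module
  have hδ : ∀ i, ‖δ i‖ ≤ β * ‖x i - X‖ + β * ‖y i - Y‖ + ‖F' i (y i) - G' i (y i)‖ := fun i =>
    (norm_add_le _ _).trans <| add_le_add_left
      ((norm_sub_le _ _).trans (add_le_add (hsmooth _ _ _) (hsmooth _ _ _))) _
  calc _ ≤ ‖X - Y‖ + η * ‖avg δ‖ := by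
        rw [hsplit]
        refine (norm_sub_le _ _).trans (add_le_add
          (norm_sub_smul_avg_gradient_sub_le hF hsmooth hconv hβ hη0 hη X Y) ?_)
        rw [norm_smul, Real.norm_of_nonneg hη0]
    _ ≤ ‖X - Y‖ + η * avg (fun i => β * ‖x i - X‖ + β * ‖y i - Y‖ + ‖F' i (y i) - G' i (y i)‖) := by
        gcongr
        exact (norm_avg_le δ).trans (avg_le_avg hδ)
    _ = _ := by simp only [avg_add, avg_const_mul]

end Step

theorem avg_norm_sub_le_of_eq_except {ι : Type*} [Fintype ι] {E Z κ : Type*}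
    [SeminormedAddCommGroup E] [DecidableEq κ] {f' : Z → E → E} {L : ℝ}
    (hL : ∀ z x, ‖f' z x‖ ≤ L) {S S' : ι → κ → Z} {r : ι} {k : κ}
    (hSS' : ∀ r' k', (r', k') ≠ (r, k) → S' r' k' = S r' k') (j : ι → κ) (x : ι → E) :
    avg (fun i => ‖f' (S i (j i)) (x i) - f' (S' i (j i)) (x i)‖)
      ≤ 2 * L / Fintype.card ι * (if j r = k then 1 else 0) := by
  rw [avg, smul_eq_mul, Finset.sum_eq_single r
    (fun i _ hi => by rw [hSS' i (j i) (by simp [hi]), sub_self, norm_zero])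
    (fun h => absurd (Finset.mem_univ r) h)]
  split_ifs with hjr
  · rw [mul_one, div_eq_inv_mul]
    gcongr
    linarith [norm_sub_le (f' (S r (j r)) (x r)) (f' (S' r (j r)) (x r)), hL (S r (j r)) (x r),
      hL (S' r (j r)) (x r)]
  · rw [hSS' r (j r) (by simp [hjr]), sub_self, norm_zero, mul_zero, mul_zero]

theorem norm_avg_sub_avg_succ_le_of_dsgd {ι κ Z : Type*} [Fintype ι] [Nonempty ι] [DecidableEq κ]
    {H : Type*} [NormedAddCommGroup H] [InnerProductSpace ℝ H] {f : Z → H → ℝ} {f' : Z → H → H}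
    {L β : ℝ} (hL : 0 ≤ L) (hβ : 0 < β)
    (hdiff : ∀ z x, HasFDerivAt (f z) (innerSL ℝ (f' z x)) x) (hgradbd : ∀ z x, ‖f' z x‖ ≤ L)
    (hsmooth : ∀ z x y, ‖f' z x - f' z y‖ ≤ β * ‖x - y‖) (hconv : ∀ z, ConvexOn ℝ univ (f z))
    {P : ι → ι → ℝ} (hrow : ∀ i, ∑ l, P i l = 1) (hcol : ∀ l, ∑ i, P i l = 1)
    {lam : ℝ} (hlam : 0 ≤ lam)
    (hspec : ∀ y : ι → H, ∑ i, y i = 0 →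
      ‖WithLp.toLp 2 (fun i => ∑ l, P i l • y l)‖ ≤ lam * ‖WithLp.toLp 2 y‖)
    {S S' : ι → κ → Z} {r : ι} {k : κ} (hSS' : ∀ r' k', (r', k') ≠ (r, k) → S' r' k' = S r' k')
    (j : ℕ → ι → κ) {η : ℕ → ℝ} (hη0 : ∀ t, 0 ≤ η t) {T : ℕ}
    (hηβ : ∀ t, 1 ≤ t → t ≤ T → η t ≤ 2 / β) {w₀ : H} {w v : ℕ → ι → H}
    (hw1 : ∀ i, w 1 i = w₀) (hv1 : ∀ i, v 1 i = w₀)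
    (hwrec : ∀ t, 1 ≤ t → t ≤ T → ∀ i,
      w (t + 1) i = ∑ l, P i l • w t l - η t • f' (S i (j t i)) (w t i))
    (hvrec : ∀ t, 1 ≤ t → t ≤ T → ∀ i,
      v (t + 1) i = ∑ l, P i l • v t l - η t • f' (S' i (j t i)) (v t i))
    (t : ℕ) (ht : 1 ≤ t) (htT : t ≤ T) :
    ‖avg (w (t + 1)) - avg (v (t + 1))‖ ≤ ‖avg (w t) - avg (v t)‖ + η t
      * (4 * β * L * discountedStepSum lam η t
        + 2 * L / Fintype.card ι * (if j t r = k then 1 else 0)) := by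
  have hw := avg_norm_sub_avg_le hrow hcol hlam hspec hL hη0 hw1 hwrec
    (fun _ _ => hgradbd _ _) t ht (by omega)
  have hv := avg_norm_sub_avg_le hrow hcol hlam hspec hL hη0 hv1 hvrec
    (fun _ _ => hgradbd _ _) t ht (by omega)
  have he := avg_norm_sub_le_of_eq_except hgradbd hSS' (j t) (v t)
  rw [funext (hwrec t ht htT), funext (hvrec t ht htT)]
  refine (norm_avg_gossip_step_sub_le hcol (fun i => hdiff (S i (j t i))) (fun _ => hsmooth _)
    (fun _ => hconv _) hβ (hη0 t) (hηβ t ht htT) (w t) (v t)).trans ?_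
  have := hη0 t
  calc _ ≤ ‖avg (w t) - avg (v t)‖ + η t * (β * (2 * L * discountedStepSum lam η t)
        + β * (2 * L * discountedStepSum lam η t)
        + 2 * L / Fintype.card ι * (if j t r = k then 1 else 0)) := by gcongr
    _ = _ := by ring

theorem dsgd_stability_convex_decreasing_step_general
    {H : Type*} [NormedAddCommGroup H] [InnerProductSpace ℝ H]
    {Z : Type*} (f : Z → H → ℝ) (f' : Z → H → H)
    (L β : ℝ) (hL : 0 < L) (hβ : 0 < β)
    (hdiff : ∀ (z : Z) (x : H), HasFDerivAt (f z) ((innerSL ℝ) (f' z x)) x)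
    (hlip : ∀ (z : Z) (x y : H), |f z x - f z y| ≤ L * ‖x - y‖)
    (hgradbd : ∀ (z : Z) (x : H), ‖f' z x‖ ≤ L)
    (hsmooth : ∀ (z : Z) (x y : H), ‖f' z x - f' z y‖ ≤ β * ‖x - y‖)
    (hconv : ∀ z : Z, ConvexOn ℝ Set.univ (f z))
    (m n T : ℕ)
    (P : Fin m → Fin m → ℝ)
    (hPsym : ∀ i l, P i l = P l i)
    (hProw : ∀ i, ∑ l, P i l = 1)
    (lam : ℝ) (hlam0 : 0 < lam) (hlam1 : lam < 1)
    (hspec : ∀ vv : Fin m → H, ∑ i, vv i = 0 →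
      Real.sqrt (∑ i, ‖∑ l, P i l • vv l‖ ^ 2) ≤ lam * Real.sqrt (∑ i, ‖vv i‖ ^ 2))
    (r : Fin m) (k : Fin n)
    (S S' : Fin m → Fin n → Z)
    (hSS' : ∀ (r' : Fin m) (k' : Fin n), (r', k') ≠ (r, k) → S' r' k' = S r' k')
    (j : ℕ → Fin m → Fin n)
    (η : ℕ → ℝ) (hηdef : ∀ t, η t = ((t : ℝ) + 1)⁻¹)
    (hηβ : ∀ t, 1 ≤ t → t ≤ T → η t ≤ 2 / β)
    (w₀ : H) (w v : ℕ → Fin m → H)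
    (hw1 : ∀ i, w 1 i = w₀) (hv1 : ∀ i, v 1 i = w₀)
    (hwrec : ∀ t, 1 ≤ t → t ≤ T → ∀ i,
      w (t + 1) i = ∑ l, P i l • w t l - η t • f' (S i (j t i)) (w t i))
    (hvrec : ∀ t, 1 ≤ t → t ≤ T → ∀ i,
      v (t + 1) i = ∑ l, P i l • v t l - η t • f' (S' i (j t i)) (v t i))
    :
    ∀ z : Z,
      |f z ((m : ℝ)⁻¹ • ∑ i, w (T + 1) i) - f z ((m : ℝ)⁻¹ • ∑ i, v (T + 1) i)| ≤
        4 * β * L ^ 2 * Clam lam * ((T : ℝ) / ((T : ℝ) + 1))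
          + 2 * L ^ 2 / m * ∑ t ∈ Finset.Icc 1 T, (if j t r = k then (1 : ℝ) else 0) / ((t : ℝ) + 1) := by
  intro z
  have : Nonempty (Fin m) := ⟨r⟩
  obtain rfl : η = fun t : ℕ => ((t : ℝ) + 1)⁻¹ := funext hηdef
  have hη0 : ∀ t : ℕ, 0 ≤ ((t : ℝ) + 1)⁻¹ := fun t => by positivity
  have hcol : ∀ l, ∑ i, P i l = 1 := fun l => by
    rw [← hProw l]; exact Finset.sum_congr rfl fun i _ => hPsym i l
  have hspec' : ∀ y : Fin m → H, ∑ i, y i = 0 →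
      ‖WithLp.toLp 2 (fun i => ∑ l, P i l • y l)‖ ≤ lam * ‖WithLp.toLp 2 y‖ := fun y hy => by
    simpa only [PiLp.norm_eq_of_L2] using hspec y hy
  set K := discountedStepSum lam fun t : ℕ => ((t : ℝ) + 1)⁻¹
  have hstep := norm_avg_sub_avg_succ_le_of_dsgd hL.le hβ hdiff hgradbd hsmooth hconv hProw hcol
    hlam0.le hspec' hSS' j hη0 hηβ hw1 hv1 hwrec hvrec
  simp only [Fintype.card_fin] at hstep
  have htel := le_add_sum_Icc_of_succ_le (u := fun t => ‖avg (w t) - avg (v t)‖) hstep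
  have h1 : avg (w 1) = avg (v 1) := by rw [funext hw1, funext hv1]
  rw [h1, sub_self, norm_zero, zero_add] at htel
  have hsum : ∑ t ∈ Finset.Icc 1 T, ((t : ℝ) + 1)⁻¹ * K t ≤ Clam lam * (T / (T + 1)) :=
    (sum_Icc_inv_mul_discountedStepSum_le hlam0.le hlam1 T).trans
      (by gcongr; exact inv_one_sub_le_Clam hlam0 hlam1)
  have havg : ∀ x : Fin m → H, (m : ℝ)⁻¹ • ∑ i, x i = avg x := fun x => by
    rw [avg, Fintype.card_fin]
  rw [havg, havg]
  calc _ ≤ L * ‖avg (w (T + 1)) - avg (v (T + 1))‖ := hlip z _ _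
    _ ≤ L * _ := mul_le_mul_of_nonneg_left htel hL.le
    _ = 4 * β * L ^ 2 * ∑ t ∈ Finset.Icc 1 T, ((t : ℝ) + 1)⁻¹ * K t
        + 2 * L ^ 2 / m
          * ∑ t ∈ Finset.Icc 1 T, (if j t r = k then (1 : ℝ) else 0) / ((t : ℝ) + 1) := by
      rw [Finset.mul_sum, Finset.mul_sum, Finset.mul_sum, ← Finset.sum_add_distrib]
      exact Finset.sum_congr rfl fun t _ => by ring
    _ ≤ _ := by rw [mul_assoc (4 * β * L ^ 2)]; gcongr

/-- convex case, decreasing stepsize `η_t = 1/(t+1)`, `1/(t+1) ≤ 2/β`. -/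
theorem dsgd_stability_convex_decreasing_step
    {H : Type*} [NormedAddCommGroup H] [InnerProductSpace ℝ H]
    {Z : Type*} (f : Z → H → ℝ) (f' : Z → H → H)
    (L β : ℝ) (hL : 0 < L) (hβ : 0 < β)
    (hdiff : ∀ (z : Z) (x : H), HasFDerivAt (f z) ((innerSL ℝ) (f' z x)) x)
    (hlip : ∀ (z : Z) (x y : H), |f z x - f z y| ≤ L * ‖x - y‖)
    (hgradbd : ∀ (z : Z) (x : H), ‖f' z x‖ ≤ L)
    (hsmooth : ∀ (z : Z) (x y : H), ‖f' z x - f' z y‖ ≤ β * ‖x - y‖)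
    (hconv : ∀ z : Z, ConvexOn ℝ Set.univ (f z))
    (m n T : ℕ) (hm : 1 ≤ m) (hn : 1 ≤ n) (hT : 1 ≤ T)
    (P : Fin m → Fin m → ℝ)
    (hPsym : ∀ i l, P i l = P l i)
    (hPpos : ∀ i l, 0 ≤ P i l)
    (hProw : ∀ i, ∑ l, P i l = 1)
    (lam : ℝ) (hlam0 : 0 < lam) (hlam1 : lam < 1)
    (hspec : ∀ vv : Fin m → H, ∑ i, vv i = 0 →
      Real.sqrt (∑ i, ‖∑ l, P i l • vv l‖ ^ 2) ≤ lam * Real.sqrt (∑ i, ‖vv i‖ ^ 2))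
    (r : Fin m) (k : Fin n)
    (S S' : Fin m → Fin n → Z)
    (hSS' : ∀ (r' : Fin m) (k' : Fin n), (r', k') ≠ (r, k) → S' r' k' = S r' k')
    (j : ℕ → Fin m → Fin n)
    (η : ℕ → ℝ) (hηdef : ∀ t, η t = ((t : ℝ) + 1)⁻¹)
    (hηβ : ∀ t, 1 ≤ t → t ≤ T → η t ≤ 2 / β)
    (w₀ : H) (w v : ℕ → Fin m → H)
    (hw1 : ∀ i, w 1 i = w₀) (hv1 : ∀ i, v 1 i = w₀)
    (hwrec : ∀ t, 1 ≤ t → t ≤ T → ∀ i,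
      w (t + 1) i = ∑ l, P i l • w t l - η t • f' (S i (j t i)) (w t i))
    (hvrec : ∀ t, 1 ≤ t → t ≤ T → ∀ i,
      v (t + 1) i = ∑ l, P i l • v t l - η t • f' (S' i (j t i)) (v t i))
    :
    ∀ z : Z,
      |f z ((m : ℝ)⁻¹ • ∑ i, w (T + 1) i) - f z ((m : ℝ)⁻¹ • ∑ i, v (T + 1) i)| ≤
        4 * β * L ^ 2 * Clam lam * ((T : ℝ) / ((T : ℝ) + 1))
          + 2 * L ^ 2 / m * ∑ t ∈ Finset.Icc 1 T, (if j t r = k then (1 : ℝ) else 0) / ((t : ℝ) + 1) :=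
  dsgd_stability_convex_decreasing_step_general f f' L β hL hβ hdiff hlip hgradbd hsmooth hconv m n
    T P hPsym hProw lam hlam0 hlam1 hspec r k S S' hSS' j η hηdef hηβ w₀ w v hw1 hv1 hwrec hvrec
end
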